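/- arXiv:1609.00897 — 4 statements merged into one kernel-verified Lean document; each statement's English description precedes it below -/
import Mathlib

section
/- Let $h, v \colon \mathbb{R} \to \mathbb{R}$ be $C^1$ functions that are $1$-periodic, let $c \in \mathbb{R}$, and suppose that $e^{h(s)} v'(s) + (c + e^{h(s)} h'(s)) v(s) > -1$ for all $s \in \mathbb{R}$. If there exists $s_0 \in [0,1]$ with $v(s_0) = 0$, then there is a constant $C$ depending only on $c$ and $h$ (not on $v$) such that $|v(s)| \leq C$ for all $s \in \mathbb{R}$. -/
/-!
The integrating factor `exp G`, with `G' = c e^{-h} + h'`, turns the differential inequality into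
`(exp G * v)' > -exp (G - h)`. Hence `exp G * v + Φ` is monotone for a primitive `Φ` of
`exp (G - h)`; as `exp G * v` vanishes at `s₀` and at `s₀ + 1`, it is bounded on `[s₀, s₀ + 1]`
by the increment of `Φ` over `[0, 2]`, and then so is `v`, up to a bound for `exp (-G)` on `[0, 2]`.
Periodicity of `v` carries the bound to all of `ℝ`.
-/

open Real Set

theorem Continuous.exists_hasDerivAt {f : ℝ → ℝ} (hf : Continuous f) :
    ∃ F : ℝ → ℝ, ∀ x, HasDerivAt F (f x) x :=
  ⟨fun x => ∫ t in (0 : ℝ)..x, f t, fun x => (hf.integral_hasStrictDerivAt 0 x).hasDerivAt⟩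

theorem Function.Periodic.abs_le_of_forall_mem_Icc {v : ℝ → ℝ} {p a C : ℝ}
    (hv : Function.Periodic v p) (hp : 0 < p) (hC : ∀ t ∈ Icc a (a + p), |v t| ≤ C) (s : ℝ) :
    |v s| ≤ C := by
  obtain ⟨t, ht, hst⟩ := hv.exists_mem_Ico hp s a
  exact hst ▸ hC t (Ico_subset_Icc_self ht)

theorem abs_le_sub_of_monotone_add {w Φ : ℝ → ℝ} {a b t : ℝ} (hmono : Monotone (w + Φ))
    (hΦ : Monotone Φ) (ha : w a = 0) (hb : w b = 0) (ht : t ∈ Icc a b) :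
    |w t| ≤ Φ b - Φ a := by
  have hlow := hmono ht.1
  have hupp := hmono ht.2
  simp only [Pi.add_apply, ha, hb] at hlow hupp
  exact abs_le.2 ⟨by linarith [hΦ ht.2], by linarith [hΦ ht.1]⟩

theorem hasDerivAt_exp_mul_integratingFactor {c h' v' s : ℝ} {G h v : ℝ → ℝ}
    (hG : HasDerivAt G (c * exp (-h s) + h') s) (hv : HasDerivAt v v' s) :
    HasDerivAt (fun s => exp (G s) * v s)
      (exp (G s - h s) * (exp (h s) * v' + (c + exp (h s) * h') * v s)) s := by
  refine (hG.exp.mul hv).congr_deriv ?_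
  rw [exp_sub, exp_neg]
  field_simp
  ring

theorem monotone_exp_mul_add_of_integratingFactor {c : ℝ} {G Φ h h' v : ℝ → ℝ}
    (hG : ∀ s, HasDerivAt G (c * exp (-h s) + h' s) s)
    (hΦ : ∀ s, HasDerivAt Φ (exp (G s - h s)) s) (hv : Differentiable ℝ v)
    (hode : ∀ s, exp (h s) * deriv v s + (c + exp (h s) * h' s) * v s > -1) :
    Monotone ((fun s => exp (G s) * v s) + Φ) := by
  have hderiv : ∀ s, HasDerivAt ((fun s => exp (G s) * v s) + Φ)
      (exp (G s - h s) * (exp (h s) * deriv v s + (c + exp (h s) * h' s) * v s + 1)) s :=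
    fun s => ((hasDerivAt_exp_mul_integratingFactor (hG s) (hv s).hasDerivAt).add
      (hΦ s)).congr_deriv (by ring)
  refine monotone_of_deriv_nonneg (fun s => (hderiv s).differentiableAt) fun s => ?_
  rw [(hderiv s).deriv]
  exact mul_nonneg (exp_pos _).le (by linarith [hode s])

theorem stmt_0_general (c : ℝ) (h : ℝ → ℝ) (hh : ContDiff ℝ 1 h) :
    ∃ C : ℝ, ∀ v : ℝ → ℝ, ContDiff ℝ 1 v → Function.Periodic v 1 →
      (∀ s : ℝ, Real.exp (h s) * deriv v s + (c + Real.exp (h s) * deriv h s) * v s > -1) →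
      (∃ s₀ ∈ Set.Icc (0:ℝ) 1, v s₀ = 0) →
      ∀ s : ℝ, |v s| ≤ C := by
  obtain ⟨G, hG⟩ : ∃ G : ℝ → ℝ, ∀ s, HasDerivAt G (c * exp (-h s) + deriv h s) s :=
    ((continuous_const.mul hh.continuous.neg.rexp).add
      (hh.continuous_deriv le_rfl)).exists_hasDerivAt
  have hGc : Continuous G := continuous_iff_continuousAt.2 fun s => (hG s).continuousAt
  obtain ⟨Φ, hΦ⟩ : ∃ Φ : ℝ → ℝ, ∀ s, HasDerivAt Φ (exp (G s - h s)) s :=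
    (hGc.sub hh.continuous).rexp.exists_hasDerivAt
  have hΦmono : Monotone Φ := monotone_of_deriv_nonneg (fun s => (hΦ s).differentiableAt)
    fun s => (hΦ s).deriv ▸ (exp_pos _).le
  obtain ⟨M, hM⟩ : ∃ M, ∀ t ∈ Icc (0 : ℝ) 2, ‖exp (-G t)‖ ≤ M :=
    isCompact_Icc.exists_bound_of_continuousOn hGc.neg.rexp.continuousOn
  refine ⟨M * (Φ 2 - Φ 0), fun v hv hvper hode ⟨s₀, hs₀, hvs₀⟩ => ?_⟩
  refine hvper.abs_le_of_forall_mem_Icc one_pos (a := s₀) fun t ht => ?_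
  have ht₀₂ : t ∈ Icc (0 : ℝ) 2 := ⟨hs₀.1.trans ht.1, ht.2.trans (by linarith [hs₀.2])⟩
  have hw : |exp (G t) * v t| ≤ Φ (s₀ + 1) - Φ s₀ :=
    abs_le_sub_of_monotone_add (w := fun s => exp (G s) * v s)
      (monotone_exp_mul_add_of_integratingFactor hG hΦ (hv.differentiable one_ne_zero) hode)
      hΦmono (by simp [hvs₀]) (by simp [hvper s₀, hvs₀]) ht
  have hΦ_le : Φ (s₀ + 1) - Φ s₀ ≤ Φ 2 - Φ 0 := by
    linarith [hΦmono hs₀.1, hΦmono (show s₀ + 1 ≤ 2 by linarith [hs₀.2])]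
  calc |v t| = exp (-G t) * |exp (G t) * v t| := by
        rw [abs_mul, abs_exp, ← mul_assoc, ← exp_add, neg_add_cancel, exp_zero, one_mul]
    _ ≤ M * (Φ 2 - Φ 0) := by
        have hMt : exp (-G t) ≤ M := by simpa using hM t ht₀₂
        exact mul_le_mul hMt (hw.trans hΦ_le) (abs_nonneg _) ((exp_pos _).le.trans hMt)

/-- Periodic ODE comparison lemma: if `h, v` are `C¹` and 1-periodic,
`e^{h} v' + (c + e^{h} h') v > -1` everywhere, and `v` vanishes somewhere in `[0,1]`,
then `|v| ≤ C` for a constant `C` depending only on `c` and `h`. -/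
theorem stmt_0 (c : ℝ) (h : ℝ → ℝ) (hh : ContDiff ℝ 1 h) (hper : Function.Periodic h 1) :
    ∃ C : ℝ, ∀ v : ℝ → ℝ, ContDiff ℝ 1 v → Function.Periodic v 1 →
      (∀ s : ℝ, Real.exp (h s) * deriv v s + (c + Real.exp (h s) * deriv h s) * v s > -1) →
      (∃ s₀ ∈ Set.Icc (0:ℝ) 1, v s₀ = 0) →
      ∀ s : ℝ, |v s| ≤ C :=
  stmt_0_general c h hh
end

section
/- Let $u \colon \mathbb{R}^2 \to \mathbb{R}$ be $C^2$ and $\mathbb{Z}^2$-periodic, $h \colon \mathbb{R} \to \mathbb{R}$ be $C^1$ and $1$-periodic, $c \in \mathbb{R}$, and suppose everywhere $\big(1 + e^{h} u_{xx} + (c + e^{h} h') u_x\big)(1 + u_{yy}) - e^{h} u_{xy}^2 > 0$. Then for every $(x,y) \in \mathbb{R}^2$ one has $1 + e^{h(x)} u_{xx}(x,y) + (c + e^{h(x)} h'(x)) u_x(x,y) > 0$ and $1 + u_{yy}(x,y) > 0$; i.e., the product decomposition factors are everywhere positive. -/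
noncomputable section

/-- First partial derivatives. -/
def px (u : ℝ → ℝ → ℝ) (x y : ℝ) : ℝ := deriv (fun t => u t y) x
def py (u : ℝ → ℝ → ℝ) (x y : ℝ) : ℝ := deriv (fun t => u x t) y
/-- Second partial derivatives. -/
def pxx (u : ℝ → ℝ → ℝ) (x y : ℝ) : ℝ := deriv (fun t => px u t y) x
def pyy (u : ℝ → ℝ → ℝ) (x y : ℝ) : ℝ := deriv (fun t => py u x t) y
def pxy (u : ℝ → ℝ → ℝ) (x y : ℝ) : ℝ := deriv (fun t => px u x t) y

/-!
Fix `x` and let `A t`, `B t = 1 + u_yy(x, t)` be the two factors. The hypothesis says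
`A · B > e^h u_xy² ≥ 0`, so `A` and `B` never vanish and have the same sign. The continuous
function `B` therefore has constant sign on `ℝ`, and it is positive at a minimum point of the
`1`-periodic function `t ↦ u(x, t)`, where `u_yy ≥ 0`. Hence `B > 0`, and then `A > 0`.
-/

open Function Filter Topology

theorem IsLocalMin.deriv_deriv_nonneg {f : ℝ → ℝ} {x₀ : ℝ} (hmin : IsLocalMin f x₀)
    (hc : ContinuousAt f x₀) : 0 ≤ deriv (deriv f) x₀ := by
  by_contra! hneg
  -- by the second-derivative test `x₀` is also a local maximum, so `f` is locally constant
  have hmax : IsLocalMax f x₀ := isLocalMax_of_deriv_deriv_neg hneg hmin.deriv_eq_zero hc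
  have hconst : f =ᶠ[𝓝 x₀] fun _ => f x₀ :=
    (hmin.and hmax).mono fun _ hx => le_antisymm hx.2 hx.1
  have hzero : deriv (deriv f) x₀ = 0 := by
    rw [hconst.deriv.deriv_eq, deriv_const', deriv_const]
  exact hneg.ne hzero

theorem Function.Periodic.exists_forall_le {α : Type*} [TopologicalSpace α] [LinearOrder α]
    [ClosedIicTopology α] {f : ℝ → α} {c : ℝ} (hp : Periodic f c) (hc : c ≠ 0)
    (hf : Continuous f) : ∃ x₀, ∀ x, f x₀ ≤ f x := by
  obtain ⟨_, ⟨x₀, rfl⟩, hleast⟩ :=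
    (hp.compact_of_continuous hc hf).exists_isLeast (Set.range_nonempty f)
  exact ⟨x₀, fun x => hleast ⟨x, rfl⟩⟩

theorem pos_of_ne_zero_of_pos {α β : Type*} [TopologicalSpace α] [PreconnectedSpace α]
    [LinearOrder β] [TopologicalSpace β] [OrderClosedTopology β] [Zero β] {f : α → β}
    (hf : Continuous f) (hne : ∀ x, f x ≠ 0) {x₀ : α} (hx₀ : 0 < f x₀) (x : α) :
    0 < f x := by
  by_contra! hle
  obtain ⟨y, -, hy⟩ := isPreconnected_univ.intermediate_value (Set.mem_univ x)
    (Set.mem_univ x₀) hf.continuousOn ⟨hle, hx₀.le⟩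
  exact hne y hy

theorem Function.Periodic.one_add_deriv_deriv_pos {g : ℝ → ℝ} {c : ℝ}
    (hg : ContDiff ℝ 2 g) (hp : Periodic g c) (hc : c ≠ 0)
    (hne : ∀ t, 1 + deriv (deriv g) t ≠ 0) (t : ℝ) :
    0 < 1 + deriv (deriv g) t := by
  obtain ⟨t₀, ht₀⟩ := hp.exists_forall_le hc hg.continuous
  have hmin : 0 ≤ deriv (deriv g) t₀ :=
    IsLocalMin.deriv_deriv_nonneg (Eventually.of_forall ht₀) hg.continuous.continuousAt
  have hcont : Continuous fun t => 1 + deriv (deriv g) t :=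
    continuous_const.add (hg.iterate_deriv' 0 2).continuous
  exact pos_of_ne_zero_of_pos hcont hne (x₀ := t₀) (by linarith) t

theorem stmt_4_general (u : ℝ → ℝ → ℝ) (hu : ContDiff ℝ 2 (Function.uncurry u))
    (huper : ∀ (x y : ℝ) (m n : ℤ), u (x + m) (y + n) = u x y)
    (h : ℝ → ℝ) (c : ℝ)
    (hpos : ∀ x y : ℝ,
      (1 + Real.exp (h x) * pxx u x y + (c + Real.exp (h x) * deriv h x) * px u x y) *
          (1 + pyy u x y) - Real.exp (h x) * (pxy u x y) ^ 2 > 0) :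
    ∀ x y : ℝ,
      1 + Real.exp (h x) * pxx u x y + (c + Real.exp (h x) * deriv h x) * px u x y > 0 ∧
        1 + pyy u x y > 0 := by
  intro x y
  have hprod : ∀ t, 0 < (1 + Real.exp (h x) * pxx u x t
      + (c + Real.exp (h x) * deriv h x) * px u x t) * (1 + pyy u x t) := fun t => by
    nlinarith [hpos x t, Real.exp_pos (h x), sq_nonneg (pxy u x t)]
  have hslice : ContDiff ℝ 2 (u x) := hu.comp (contDiff_const.prodMk contDiff_id)
  have hper : Periodic (u x) 1 := fun t => by simpa using huper x t 0 1
  have hB : 0 < 1 + pyy u x y := hper.one_add_deriv_deriv_pos hslice one_ne_zero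
    (fun t => right_ne_zero_of_mul (hprod t).ne') y
  exact ⟨(pos_iff_pos_of_mul_pos (hprod y)).mpr hB, hB⟩

/-- If the determinant-type expression is everywhere positive for a `ℤ²`-periodic `C²`
function, then both diagonal factors are everywhere positive. -/
theorem stmt_4 (u : ℝ → ℝ → ℝ) (hu : ContDiff ℝ 2 (Function.uncurry u))
    (huper : ∀ (x y : ℝ) (m n : ℤ), u (x + m) (y + n) = u x y)
    (h : ℝ → ℝ) (hh : ContDiff ℝ 1 h) (hhper : Function.Periodic h 1) (c : ℝ)
    (hpos : ∀ x y : ℝ,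
      (1 + Real.exp (h x) * pxx u x y + (c + Real.exp (h x) * deriv h x) * px u x y) *
          (1 + pyy u x y) - Real.exp (h x) * (pxy u x y) ^ 2 > 0) :
    ∀ x y : ℝ,
      1 + Real.exp (h x) * pxx u x y + (c + Real.exp (h x) * deriv h x) * px u x y > 0 ∧
        1 + pyy u x y > 0 :=
  stmt_4_general u hu huper h c hpos

end
end

section
/- Let $h \colon \mathbb{R} \to \mathbb{R}$ be smooth and $1$-periodic and $c \in \mathbb{R}$. Suppose $u \colon \mathbb{R}^2 \to \mathbb{R}$ is $C^2$, $\mathbb{Z}^2$-periodic, and satisfies the equation $\big(e^{-h(x)} + u_{xx} + (c e^{-h(x)} + h'(x)) u_x\big)(1 + u_{yy}) - u_{xy}^2 = e^{F(x,y) - h(x)}$ on $\mathbb{R}^2$, where $F$ is continuous and $\mathbb{Z}^2$-periodic. Then there exists a constant $C$ depending only on $c$, $h$, and $F$ such that $\|u_x\|_{C^0} \leq C$ and $\|u_y\|_{C^0} \leq C$. -/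
noncomputable section

open Set

lemma c2_deriv {g : ℝ → ℝ} (hg : ContDiff ℝ 2 g) :
    Differentiable ℝ g ∧ Differentiable ℝ (deriv g) ∧ Continuous (deriv (deriv g)) := by
  have h2 : ContDiff ℝ ((1 : WithTop ℕ∞) + 1) g := by
    convert hg using 2 <;> norm_num
  rw [contDiff_succ_iff_deriv] at h2
  obtain ⟨hd, -, hg1⟩ := h2
  rw [contDiff_one_iff_deriv] at hg1
  exact ⟨hd, hg1.1, hg1.2⟩

lemma periodic_deriv' {g : ℝ → ℝ} (hg : Function.Periodic g 1) :
    Function.Periodic (deriv g) 1 := by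
  intro x
  have hfun : (fun t => g (t + 1)) = g := funext fun t => hg t
  calc deriv g (x + 1) = deriv (fun t => g (t + 1)) x := (deriv_comp_add_const g 1 x).symm
    _ = deriv g x := by rw [hfun]

lemma mono_diff {w : ℝ → ℝ} {M : ℝ} (hw : Differentiable ℝ w)
    (hM : ∀ x ∈ Set.Icc (-1:ℝ) 2, -M ≤ deriv w x) :
    ∀ a ∈ Set.Icc (-1:ℝ) 2, ∀ b ∈ Set.Icc (-1:ℝ) 2, a ≤ b → -(M * (b - a)) ≤ w b - w a := by
  intro a ha b hb hab
  have hmono : MonotoneOn (fun x => w x + M * x) (Set.Icc (-1:ℝ) 2) := by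
    apply monotoneOn_of_deriv_nonneg (convex_Icc _ _)
    · exact ((hw.continuous).add (continuous_const.mul continuous_id)).continuousOn
    · exact (hw.add (differentiable_id.const_mul M)).differentiableOn
    · intro x hx
      have hx' : x ∈ Set.Icc (-1:ℝ) 2 := interior_subset hx
      have hd : HasDerivAt (fun x => w x + M * x) (deriv w x + M) x := by
        have h0 := (hw x).hasDerivAt.add ((hasDerivAt_id' x).const_mul M)
        rw [mul_one] at h0
        exact h0
      rw [hd.deriv]
      linarith [hM x hx']
  have := hmono ha hb hab
  simp only at this
  linarith

/-- Key comparison lemma: a `1`-periodic differentiable function `v` vanishing at a point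
`x₀ ∈ (0,1)` and satisfying the differential inequality
`exp (G x) * (v' x + G' x * v x) ≥ -M` on `[-1,2]` is bounded by `M * M'` where `M'` bounds
`exp (-G)` on `[-1,2]`. -/
lemma comp_bound {v G : ℝ → ℝ} {M M' : ℝ} (hv : Differentiable ℝ v)
    (hG : Differentiable ℝ G)
    (hvper : Function.Periodic v 1)
    (hM : ∀ x ∈ Set.Icc (-1:ℝ) 2, -M ≤ Real.exp (G x) * (deriv v x + deriv G x * v x))
    (hM' : ∀ x ∈ Set.Icc (-1:ℝ) 2, Real.exp (-G x) ≤ M')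
    (hMpos : 0 ≤ M)
    {x₀ : ℝ} (hx₀ : x₀ ∈ Set.Ioo (0:ℝ) 1) (hv0 : v x₀ = 0) :
    ∀ x, |v x| ≤ M * M' := by
  obtain ⟨hx₀0, hx₀1⟩ := hx₀
  set w : ℝ → ℝ := fun x => Real.exp (G x) * v x with hw_def
  have hw : Differentiable ℝ w := (hG.exp).mul hv
  have hwd : ∀ x, HasDerivAt w (Real.exp (G x) * (deriv v x + deriv G x * v x)) x := by
    intro x
    have h1 : HasDerivAt (fun t => Real.exp (G t)) (Real.exp (G x) * deriv G x) x :=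
      (hG x).hasDerivAt.exp
    have h2 := h1.mul (hv x).hasDerivAt
    have h3 : Real.exp (G x) * (deriv v x + deriv G x * v x) =
        Real.exp (G x) * deriv G x * v x + Real.exp (G x) * deriv v x := by ring
    rw [h3]
    exact h2
  have hderiv : ∀ x ∈ Set.Icc (-1:ℝ) 2, -M ≤ deriv w x := by
    intro x hx
    rw [(hwd x).deriv]
    exact hM x hx
  have hmono := mono_diff hw hderiv
  have hMnonneg : 0 ≤ M' := le_trans (Real.exp_pos _).le (hM' 0 (by norm_num))
  have hwx0 : w x₀ = 0 := by simp [hw_def, hv0]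
  -- a bound for points in the fundamental windows
  have hlow : ∀ z ∈ Set.Icc x₀ (x₀ + 1), -(M * M') ≤ v z := by
    intro z hz
    have hzI : z ∈ Set.Icc (-1:ℝ) 2 := ⟨by linarith [hz.1], by linarith [hz.2]⟩
    have hx₀I : x₀ ∈ Set.Icc (-1:ℝ) 2 := ⟨by linarith, by linarith⟩
    have h1 := hmono x₀ hx₀I z hzI hz.1
    have hwz : -M ≤ w z := by
      have : M * (z - x₀) ≤ M * 1 := by
        apply mul_le_mul_of_nonneg_left _ hMpos
        linarith [hz.2]
      rw [hwx0] at h1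
      linarith
    -- v z = exp (-G z) * w z
    have hvz : v z = Real.exp (-G z) * w z := by
      rw [hw_def]
      simp only
      rw [← mul_assoc, ← Real.exp_add]
      simp
    rw [hvz]
    rcases le_or_gt 0 (w z) with hwz0 | hwz0
    · have : 0 ≤ Real.exp (-G z) * w z := mul_nonneg (Real.exp_pos _).le hwz0
      nlinarith
    · have h2 : Real.exp (-G z) * w z ≥ M' * w z := by
        apply mul_le_mul_of_nonpos_right (hM' z hzI) hwz0.le
      have h3 : M' * w z ≥ M' * (-M) := mul_le_mul_of_nonneg_left hwz hMnonneg
      nlinarith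
  have hhigh : ∀ z ∈ Set.Icc (x₀ - 1) x₀, v z ≤ M * M' := by
    intro z hz
    have hzI : z ∈ Set.Icc (-1:ℝ) 2 := ⟨by linarith [hz.1], by linarith [hz.2]⟩
    have hx₀I : x₀ ∈ Set.Icc (-1:ℝ) 2 := ⟨by linarith, by linarith⟩
    have h1 := hmono z hzI x₀ hx₀I hz.2
    have hwz : w z ≤ M := by
      have : M * (x₀ - z) ≤ M * 1 := by
        apply mul_le_mul_of_nonneg_left _ hMpos
        linarith [hz.1]
      rw [hwx0] at h1
      linarith
    have hvz : v z = Real.exp (-G z) * w z := by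
      rw [hw_def]
      simp only
      rw [← mul_assoc, ← Real.exp_add]
      simp
    rw [hvz]
    rcases le_or_gt (w z) 0 with hwz0 | hwz0
    · have : Real.exp (-G z) * w z ≤ 0 := mul_nonpos_of_nonneg_of_nonpos (Real.exp_pos _).le hwz0
      nlinarith
    · have h2 : Real.exp (-G z) * w z ≤ M' * w z :=
        mul_le_mul_of_nonneg_right (hM' z hzI) hwz0.le
      have h3 : M' * w z ≤ M' * M := mul_le_mul_of_nonneg_left hwz hMnonneg
      nlinarith
  intro x
  rw [abs_le]
  constructor
  · -- lower bound: reduce to [x₀, x₀+1)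
    set n : ℤ := ⌊x - x₀⌋ with hn
    have hper : v (x - (n : ℝ)) = v x := by
      simpa using hvper.sub_int_mul_eq (x := x) n
    have h1 : (n : ℝ) ≤ x - x₀ := Int.floor_le _
    have h2 : x - x₀ < n + 1 := Int.lt_floor_add_one _
    have := hlow (x - n) ⟨by linarith, by linarith⟩
    rw [hper] at this
    exact this
  · -- upper bound: reduce to (x₀-1, x₀]
    set n : ℤ := ⌈x - x₀⌉ with hn
    have hper : v (x - (n : ℝ)) = v x := by
      simpa using hvper.sub_int_mul_eq (x := x) n
    have h1 : x - x₀ ≤ (n : ℝ) := Int.le_ceil _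
    have h2 : (n : ℝ) < x - x₀ + 1 := Int.ceil_lt_add_one _
    have := hhigh (x - n) ⟨by linarith, by linarith⟩
    rw [hper] at this
    exact this

/-- Gradient estimate: a `ℤ²`-periodic `C²` solution of the modified Monge–Ampère
equation has `|u_x|, |u_y| ≤ C` with `C = C(c, h, F)`. -/
theorem stmt_6 (h : ℝ → ℝ) (hh : ContDiff ℝ (⊤ : ℕ∞) h) (hhper : Function.Periodic h 1) (c : ℝ)
    (F : ℝ → ℝ → ℝ) (hF : Continuous (Function.uncurry F))
    (hFper : ∀ (x y : ℝ) (m n : ℤ), F (x + m) (y + n) = F x y) :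
    ∃ C : ℝ, ∀ u : ℝ → ℝ → ℝ, ContDiff ℝ 2 (Function.uncurry u) →
      (∀ (x y : ℝ) (m n : ℤ), u (x + m) (y + n) = u x y) →
      (∀ x y : ℝ,
        (Real.exp (-h x) + pxx u x y + (c * Real.exp (-h x) + deriv h x) * px u x y) *
            (1 + pyy u x y) - (pxy u x y) ^ 2 = Real.exp (F x y - h x)) →
      ∀ x y : ℝ, |px u x y| ≤ C ∧ |py u x y| ≤ C := by
  classical
  have hhd : Differentiable ℝ h := hh.differentiable (by simp)
  -- the integrating factor
  set G : ℝ → ℝ := fun x => c * (∫ t in (0:ℝ)..x, Real.exp (-h t)) + h x with hG_def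
  have hcont_e : Continuous (fun t => Real.exp (-h t)) := (hh.continuous.neg).rexp
  have hGd : ∀ x, HasDerivAt G (c * Real.exp (-h x) + deriv h x) x := by
    intro x
    have h1 : HasDerivAt (fun s => ∫ t in (0:ℝ)..s, Real.exp (-h t)) (Real.exp (-h x)) x :=
      intervalIntegral.integral_hasDerivAt_right (hcont_e.intervalIntegrable 0 x)
        (hcont_e.stronglyMeasurableAtFilter _ _) hcont_e.continuousAt
    exact (h1.const_mul c).add (hhd x).hasDerivAt
  have hGdiff : Differentiable ℝ G := fun x => (hGd x).differentiableAt
  -- bounds for the exponential weights on `[-1, 2]`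
  obtain ⟨M, hM⟩ := (isCompact_Icc : IsCompact (Set.Icc (-1:ℝ) 2)).exists_bound_of_continuousOn
    ((hGdiff.continuous.sub hh.continuous).rexp.continuousOn)
  obtain ⟨M', hM'⟩ := (isCompact_Icc : IsCompact (Set.Icc (-1:ℝ) 2)).exists_bound_of_continuousOn
    ((hGdiff.continuous.neg).rexp.continuousOn)
  have hMb : ∀ x ∈ Set.Icc (-1:ℝ) 2, Real.exp (G x - h x) ≤ M := by
    intro x hx
    have := hM x hx
    rw [Real.norm_eq_abs] at this
    exact (le_abs_self _).trans this
  have hM'b : ∀ x ∈ Set.Icc (-1:ℝ) 2, Real.exp (-G x) ≤ M' := by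
    intro x hx
    have := hM' x hx
    rw [Real.norm_eq_abs] at this
    exact (le_abs_self _).trans this
  have hMpos : 0 < M := lt_of_lt_of_le (Real.exp_pos _) (hMb 0 (by norm_num))
  have hM'pos : 0 < M' := lt_of_lt_of_le (Real.exp_pos _) (hM'b 0 (by norm_num))
  refine ⟨max 1 (M * M'), ?_⟩
  intro u hu hper heq
  -- one-variable sections are C²
  have hgx : ∀ y : ℝ, ContDiff ℝ 2 (fun t => u t y) := fun y =>
    hu.comp (contDiff_id.prodMk contDiff_const)
  have hgy : ∀ x : ℝ, ContDiff ℝ 2 (fun t => u x t) := fun x =>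
    hu.comp (contDiff_const.prodMk contDiff_id)
  -- periodicity of the sections
  have hperx : ∀ y : ℝ, Function.Periodic (fun t => u t y) 1 := by
    intro y x
    have := hper x y 1 0
    push_cast at this
    simpa using this
  have hpery : ∀ x : ℝ, Function.Periodic (fun t => u x t) 1 := by
    intro x y
    have := hper x y 0 1
    push_cast at this
    simpa using this
  -- Step 1: `1 + u_yy > 0` everywhere
  have hB : ∀ x y : ℝ, 0 < 1 + pyy u x y := by
    intro x
    obtain ⟨hgd, hgd2, hgc⟩ := c2_deriv (hgy x)
    have hkey : ∀ y : ℝ, pyy u x y = deriv (deriv (fun t => u x t)) y := fun y => rfl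
    have hne : ∀ y : ℝ, 1 + pyy u x y ≠ 0 := by
      intro y hzero
      have he := heq x y
      rw [hzero, mul_zero] at he
      nlinarith [Real.exp_pos (F x y - h x), sq_nonneg (pxy u x y)]
    have hpos : ∃ y : ℝ, 0 < 1 + pyy u x y := by
      by_contra hcon
      push_neg at hcon
      have hneg : ∀ y : ℝ, deriv (deriv (fun t => u x t)) y < 0 := by
        intro y
        have := hcon y
        rw [hkey] at this
        linarith
      have hanti : StrictAnti (deriv (fun t => u x t)) := strictAnti_of_deriv_neg hneg
      have h01 : deriv (fun t => u x t) 1 < deriv (fun t => u x t) 0 := hanti one_pos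
      have hpq : deriv (fun t => u x t) (0 + 1) = deriv (fun t => u x t) 0 :=
        periodic_deriv' (hpery x) 0
      rw [zero_add] at hpq
      linarith
    obtain ⟨y₁, hy₁⟩ := hpos
    intro y
    by_contra hcon
    push_neg at hcon
    have hlt : 1 + pyy u x y < 0 := lt_of_le_of_ne hcon (hne y)
    have hcontB : Continuous (fun t => 1 + pyy u x t) := by
      have : (fun t => 1 + pyy u x t) = fun t => 1 + deriv (deriv (fun s => u x s)) t := rfl
      rw [this]
      exact continuous_const.add hgc
    have hsub := intermediate_value_uIcc (hcontB.continuousOn (s := Set.uIcc y y₁))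
    have hmem : (0:ℝ) ∈ Set.uIcc (1 + pyy u x y) (1 + pyy u x y₁) := by
      rw [Set.mem_uIcc]
      left
      exact ⟨hlt.le, hy₁.le⟩
    obtain ⟨z, _, hz0⟩ := hsub hmem
    exact hne z hz0
  -- Step 2: the first factor is positive everywhere
  have hA : ∀ x y : ℝ,
      0 < Real.exp (-h x) + pxx u x y + (c * Real.exp (-h x) + deriv h x) * px u x y := by
    intro x y
    have hb := hB x y
    have he := heq x y
    nlinarith [Real.exp_pos (F x y - h x), sq_nonneg (pxy u x y)]
  intro x y
  constructor
  · -- bound for u_x, at fixed y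
    obtain ⟨hgd, hgd2, hgc⟩ := c2_deriv (hgx y)
    set v : ℝ → ℝ := deriv (fun t => u t y) with hv_def
    have hvper : Function.Periodic v 1 := periodic_deriv' (hperx y)
    -- zero of v in (0,1)
    have hu01 : u 1 y = u 0 y := by
      have := hperx y 0
      simpa using this
    obtain ⟨x₀, hx₀, hx₀v⟩ := exists_deriv_eq_slope (fun t => u t y) one_pos
      (hgd.continuous.continuousOn) (hgd.differentiableOn)
    have hv0 : v x₀ = 0 := by
      rw [hv_def, hx₀v, hu01]
      simp
    have hMhyp : ∀ t ∈ Set.Icc (-1:ℝ) 2, -M ≤ Real.exp (G t) * (deriv v t + deriv G t * v t) := by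
      intro t ht
      have ha := hA t y
      have hpxx : pxx u t y = deriv v t := rfl
      have hpx : px u t y = v t := rfl
      rw [hpxx, hpx] at ha
      rw [(hGd t).deriv]
      have h1 : -Real.exp (-h t) ≤ deriv v t + (c * Real.exp (-h t) + deriv h t) * v t := by
        linarith
      have h2 : Real.exp (G t) * (-Real.exp (-h t)) ≤
          Real.exp (G t) * (deriv v t + (c * Real.exp (-h t) + deriv h t) * v t) :=
        mul_le_mul_of_nonneg_left h1 (Real.exp_pos _).le
      have h3 : Real.exp (G t) * (-Real.exp (-h t)) = -Real.exp (G t - h t) := by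
        rw [mul_neg, ← Real.exp_add]
        ring_nf
      have h4 := hMb t ht
      calc -M ≤ -Real.exp (G t - h t) := by linarith
        _ = Real.exp (G t) * (-Real.exp (-h t)) := h3.symm
        _ ≤ _ := h2
    have hbound := comp_bound hgd2 hGdiff hvper hMhyp hM'b hMpos.le hx₀ hv0 x
    have : px u x y = v x := rfl
    rw [this]
    exact hbound.trans (le_max_right _ _)
  · -- bound for u_y, at fixed x
    obtain ⟨hgd, hgd2, hgc⟩ := c2_deriv (hgy x)
    set v : ℝ → ℝ := deriv (fun t => u x t) with hv_def
    have hvper : Function.Periodic v 1 := periodic_deriv' (hpery x)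
    have hu01 : u x 1 = u x 0 := by
      have := hpery x 0
      simpa using this
    obtain ⟨y₀, hy₀, hy₀v⟩ := exists_deriv_eq_slope (fun t => u x t) one_pos
      (hgd.continuous.continuousOn) (hgd.differentiableOn)
    have hv0 : v y₀ = 0 := by
      rw [hv_def, hy₀v, hu01]
      simp
    have hMhyp : ∀ t ∈ Set.Icc (-1:ℝ) 2,
        -(1:ℝ) ≤ Real.exp ((fun _ => (0:ℝ)) t) *
          (deriv v t + deriv (fun _ => (0:ℝ)) t * v t) := by
      intro t ht
      have hb := hB x t
      have hpyy : pyy u x t = deriv v t := rfl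
      rw [hpyy] at hb
      simp only [Real.exp_zero, deriv_const', zero_mul, add_zero, one_mul]
      linarith
    have hM'1 : ∀ t ∈ Set.Icc (-1:ℝ) 2, Real.exp (-(fun _ => (0:ℝ)) t) ≤ (1:ℝ) := by
      intro t _
      simp
    have hbound := comp_bound hgd2 (differentiable_const (0:ℝ)) hvper hMhyp hM'1
      zero_le_one hy₀ hv0 y
    have : py u x y = v y := rfl
    rw [this]
    rw [one_mul] at hbound
    exact hbound.trans (le_max_left _ _)
end
end

section
/- For a smooth function $u = u(x_1, x_2, y_1)$ (independent of $y_2$) on $\mathbb{R}^4$ with coordinates $(x_1,x_2,y_1,y_2)$, define the 2-form $\omega_u = \sum_{i,j=1}^2 u_{x_i x_j}\, e^i \wedge f^j + u_{x_2 y_1}\, e^1 \wedge e^2 + u_{x_2 y_1}\, f^1 \wedge f^2 + (u_{y_1 y_1} + u_{y_1})\, e^1 \wedge f^1$, where $e^1 = dx_1$, $e^2 = dx_2$, $f^1 = dy_1$, $f^2 = dy_2 - x_1 dx_2$. Then $(\Omega_0 + \omega_u)^2 = \big(\det(I + \mathcal{A}(u)) - u_{x_2 y_1}^2\big)\, \Omega_0^2$,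 where $\Omega_0 = e^1 \wedge f^1 + e^2 \wedge f^2$ and $\mathcal{A}(u) = \begin{pmatrix} u_{x_1x_1} + u_{y_1y_1} + u_{y_1} & u_{x_1x_2} \\ u_{x_1x_2} & u_{x_2x_2} \end{pmatrix}$. -/
noncomputable section

/-- `ℝ⁴` with coordinates `(x₁, x₂, y₁, y₂)` indexed by `0,1,2,3`. -/
abbrev V4 : Type := Fin 4 → ℝ

/-- The coordinate differentials `dx₁, dx₂, dy₁, dy₂` as generators of the exterior
algebra of covectors. -/
def ε (i : Fin 4) : ExteriorAlgebra ℝ V4 := ExteriorAlgebra.ι ℝ (Pi.single i 1)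

/-- Partial derivative in the `i`-th coordinate direction. -/
def pd (i : Fin 4) (g : V4 → ℝ) (p : V4) : ℝ := fderiv ℝ g p (Pi.single i 1)

/-- Second partial derivative `∂ᵢ∂ⱼ`. -/
def pd2 (i j : Fin 4) (g : V4 → ℝ) : V4 → ℝ := pd i (pd j g)

/-- The coframe element `f² = dy₂ - x₁ dx₂` at the point `p`. -/
def f2 (p : V4) : ExteriorAlgebra ℝ V4 := ε 3 - p 0 • ε 1

/-- The standard symplectic form `Ω₀ = e¹∧f¹ + e²∧f²` at `p`
(with `e¹ = dx₁ = ε 0`, `e² = dx₂ = ε 1`, `f¹ = dy₁ = ε 2`). -/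
def Ω₀ (p : V4) : ExteriorAlgebra ℝ V4 := ε 0 * ε 2 + ε 1 * f2 p

/-- Symmetry of second partial derivatives for a smooth function. -/
lemma pd2_symm (u : V4 → ℝ) (hu : ContDiff ℝ (⊤ : ℕ∞) u) (i j : Fin 4) (p : V4) :
    pd2 i j u p = pd2 j i u p := by
  have hd : Differentiable ℝ u := hu.differentiable (by simp)
  have hd' : Differentiable ℝ (fderiv ℝ u) :=
    (hu.fderiv_right (m := 1) (WithTop.coe_le_coe.mpr le_top)).differentiable one_ne_zero
  have key : ∀ v w : V4, fderiv ℝ (fderiv ℝ u) p v w = fderiv ℝ (fderiv ℝ u) p w v :=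
    second_derivative_symmetric (fun y => (hd y).hasFDerivAt) (hd' p).hasFDerivAt
  have happ : pd2 i j u p =
      fderiv ℝ (fderiv ℝ u) p (Pi.single i 1) (Pi.single j 1) := by
    simp only [pd2, pd]
    have hj : pd j u = fun q => fderiv ℝ u q (Pi.single j 1) := rfl
    rw [hj, fderiv_clm_apply (hd' p) (differentiableAt_const _)]
    simp
  have happ2 : pd2 j i u p =
      fderiv ℝ (fderiv ℝ u) p (Pi.single j 1) (Pi.single i 1) := by
    simp only [pd2, pd]
    have hi : pd i u = fun q => fderiv ℝ u q (Pi.single i 1) := rfl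
    rw [hi, fderiv_clm_apply (hd' p) (differentiableAt_const _)]
    simp
  rw [happ, happ2, key]

lemma eps_sq (i : Fin 4) : ε i * ε i = 0 := ExteriorAlgebra.ι_sq_zero _
lemma eps_sq' (i : Fin 4) (y : ExteriorAlgebra ℝ V4) : ε i * (ε i * y) = 0 := by
  rw [← mul_assoc, eps_sq, zero_mul]
lemma eps_swap (i j : Fin 4) : ε j * ε i = -(ε i * ε j) :=
  eq_neg_of_add_eq_zero_left (ExteriorAlgebra.ι_add_mul_swap _ _)
lemma eps_swap' (i j : Fin 4) (y : ExteriorAlgebra ℝ V4) :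
    ε j * (ε i * y) = -(ε i * (ε j * y)) := by
  rw [← mul_assoc, eps_swap, neg_mul, mul_assoc]

set_option linter.unnecessarySeqFocus false in
/-- The purely algebraic computation in the exterior algebra. -/
lemma key_alg (a b c d e q : ℝ) :
    ((ε 0 * ε 2 + ε 1 * (ε 3 - q • ε 1)) +
      (a • (ε 0 * ε 2) + b • (ε 0 * (ε 3 - q • ε 1)) +
        b • (ε 1 * ε 2) + c • (ε 1 * (ε 3 - q • ε 1)) +
        d • (ε 0 * ε 1) + d • (ε 2 * (ε 3 - q • ε 1)) +
        e • (ε 0 * ε 2))) ^ 2 =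
    ((1 + (a + e)) * (1 + c) - b * b - d ^ 2) •
      (ε 0 * ε 2 + ε 1 * (ε 3 - q • ε 1)) ^ 2 := by
  simp only [sq, mul_sub, sub_mul, mul_add, add_mul, smul_mul_assoc, mul_smul_comm,
    smul_smul, mul_assoc, smul_sub, sub_eq_add_neg, neg_mul, mul_neg, smul_neg, neg_neg,
    eps_swap' 0 1, eps_swap' 0 2, eps_swap' 0 3, eps_swap' 1 2, eps_swap' 1 3, eps_swap' 2 3,
    eps_swap 0 1, eps_swap 0 2, eps_swap 0 3, eps_swap 1 2, eps_swap 1 3, eps_swap 2 3,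
    eps_sq, eps_sq', mul_zero, zero_mul, smul_zero, add_zero, zero_add, neg_zero]
  match_scalars <;> ring

/-- For a smooth `y₂`-independent `u`, the 2-form
`ω_u = Σ u_{xᵢxⱼ} eⁱ∧fʲ + u_{x₂y₁}(e¹∧e² + f¹∧f²) + (u_{y₁y₁}+u_{y₁}) e¹∧f¹`
satisfies `(Ω₀ + ω_u)² = (det(I + 𝒜(u)) - u_{x₂y₁}²) Ω₀²`. -/
theorem stmt_8 (u : V4 → ℝ) (hu : ContDiff ℝ (⊤ : ℕ∞) u)
    (hinv : ∀ (p : V4) (t : ℝ), u (Function.update p 3 t) = u p)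
    (p : V4) :
    (Ω₀ p +
      (pd2 0 0 u p • (ε 0 * ε 2) + pd2 0 1 u p • (ε 0 * f2 p) +
        pd2 1 0 u p • (ε 1 * ε 2) + pd2 1 1 u p • (ε 1 * f2 p) +
        pd2 1 2 u p • (ε 0 * ε 1) + pd2 1 2 u p • (ε 2 * f2 p) +
        (pd2 2 2 u p + pd 2 u p) • (ε 0 * ε 2))) ^ 2 =
    (Matrix.det (1 + !![pd2 0 0 u p + pd2 2 2 u p + pd 2 u p, pd2 0 1 u p;
        pd2 0 1 u p, pd2 1 1 u p]) - (pd2 1 2 u p) ^ 2) • (Ω₀ p) ^ 2 := by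
  rw [show pd2 1 0 u p = pd2 0 1 u p from pd2_symm u hu 1 0 p]
  have hdet : Matrix.det (1 + !![pd2 0 0 u p + pd2 2 2 u p + pd 2 u p, pd2 0 1 u p;
        pd2 0 1 u p, pd2 1 1 u p]) =
      (1 + (pd2 0 0 u p + (pd2 2 2 u p + pd 2 u p))) * (1 + pd2 1 1 u p)
        - pd2 0 1 u p * pd2 0 1 u p := by
    rw [Matrix.det_fin_two]
    simp only [Matrix.add_apply, Matrix.one_apply_eq, Matrix.one_apply_ne (by decide : (0:Fin 2) ≠ 1),
      Matrix.one_apply_ne (by decide : (1:Fin 2) ≠ 0), Matrix.cons_val', Matrix.cons_val_zero,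
      Matrix.cons_val_one, Matrix.head_cons, Matrix.head_fin_const, Matrix.empty_val',
      Matrix.cons_val_fin_one, Matrix.of_apply, zero_add]
    ring
  rw [hdet]
  simp only [Ω₀, f2]
  exact key_alg (pd2 0 0 u p) (pd2 0 1 u p) (pd2 1 1 u p) (pd2 1 2 u p)
    (pd2 2 2 u p + pd 2 u p) (p 0)
end
end
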